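/- For every self-adjoint linear relation Λ on G there exists a unique unitary operator U on G (the Cayley transform of Λ) such that Λ = {(x₁,x₂) ∈ G ⊕ G : i(1+U)x₁ = (1−U)x₂}, i.e. Λ = Λ^{i(1+U), 1−U}. -/

import Mathlib

open ContinuousLinearMap

variable {G : Type*} [NormedAddCommGroup G] [InnerProductSpace ℂ G] [CompleteSpace G]

/-- The operator `M^{A,B}` on `G × G`, `(x₁,x₂) ↦ (A x₁ - B x₂, B x₁ + A x₂)`. -/
noncomputable def MAB (A B : G →L[ℂ] G) : (G × G) →L[ℂ] (G × G) :=
  ((A.comp (fst ℂ G G)) - (B.comp (snd ℂ G G))).prod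
    ((B.comp (fst ℂ G G)) + (A.comp (snd ℂ G G)))

/-- The linear relation `Λ^{A,B} = {(x₁,x₂) : A x₁ = B x₂}`. -/
def LambdaAB (A B : G →L[ℂ] G) : Submodule ℂ (G × G) where
  carrier := {p | A p.1 = B p.2}
  add_mem' := by
    intro a b ha hb
    simp only [Set.mem_setOf_eq] at *
    simp [ha, hb]
  zero_mem' := by simp
  smul_mem' := by
    intro c p hp
    simp only [Set.mem_setOf_eq] at *
    simp [hp]

/-- The adjoint of a linear relation. -/
def relAdjoint (Λ : Submodule ℂ (G × G)) : Submodule ℂ (G × G) where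
  carrier := {p | ∀ q ∈ Λ, (inner ℂ p.1 q.2 : ℂ) = inner ℂ p.2 q.1}
  add_mem' := by
    intro a b ha hb q hq
    simp [inner_add_left, ha q hq, hb q hq]
  zero_mem' := by
    intro q hq; simp
  smul_mem' := by
    intro c p hp q hq
    simp [inner_smul_left, hp q hq]

/-- A linear relation is self-adjoint if it equals its adjoint. -/
def IsSelfAdjointRel (Λ : Submodule ℂ (G × G)) : Prop := relAdjoint Λ = Λ

/-- A bounded operator is boundedly invertible if it has a bounded two-sided inverse. -/
def IsBoundedlyInvertible {E F : Type*} [NormedAddCommGroup E] [NormedSpace ℂ E]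
    [NormedAddCommGroup F] [NormedSpace ℂ F] (T : E →L[ℂ] F) : Prop :=
  ∃ T' : F →L[ℂ] E, (∀ x, T' (T x) = x) ∧ (∀ y, T (T' y) = y)

/-- The pair `(A,B)` is normalized if `A B* = B A*` and `M^{A,B}` is boundedly invertible. -/
noncomputable def IsNormalized (A B : G →L[ℂ] G) : Prop :=
  A ∘L adjoint B = B ∘L adjoint A ∧ IsBoundedlyInvertible (MAB A B)

/-!
For `p = (x₁, x₂) ∈ Λ`, self-adjointness makes `⟪x₁, x₂⟫` real, so `x₂ + i x₁` and `x₂ - i x₁`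
both have squared norm `‖x₁‖² + ‖x₂‖²`. Hence both maps `Λ → G` are bounded below and have closed
range; if `y` is orthogonal to the range of one of them, self-adjointness puts `(y, ± i y)` in
`Λ`, where the other map vanishes, forcing `y = 0`. So both maps are isomorphisms `Λ ≃ G`, and
`U : x₂ + i x₁ ↦ x₂ - i x₁` is a surjective isometry. Since `(x₁, x₂) ∈ Λ^{i(1+U), 1-U}` says
exactly `U (x₂ + i x₁) = x₂ - i x₁`, this graph description recovers `Λ`, and determines `U`
because every vector is of the form `x₂ + i x₁` with `(x₁, x₂) ∈ Λ`.
-/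

open Complex (I)

local notation "⟪" x ", " y "⟫" => inner ℂ x y

theorem surjective_of_antilipschitz_of_forall_inner_eq_zero {𝕜 E F : Type*} [RCLike 𝕜]
    [NormedAddCommGroup E] [NormedSpace 𝕜 E] [CompleteSpace E]
    [NormedAddCommGroup F] [InnerProductSpace 𝕜 F] [CompleteSpace F]
    {f : E →L[𝕜] F} {K : NNReal} (hf : AntilipschitzWith K f)
    (h : ∀ y, (∀ x, inner 𝕜 (f x) y = 0) → y = 0) : Function.Surjective f := by
  have hclosed : IsClosed (LinearMap.range (f : E →ₗ[𝕜] F) : Set F) := by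
    rw [LinearMap.coe_range]
    exact hf.isClosed_range f.uniformContinuous
  rw [← f.coe_coe, ← LinearMap.range_eq_top, ← hclosed.submodule_topologicalClosure_eq,
    Submodule.topologicalClosure_eq_top_iff, Submodule.eq_bot_iff]
  exact fun y hy =>
    h y fun x => Submodule.inner_right_of_mem_orthogonal (LinearMap.mem_range_self _ x) hy

section

variable {E : Type*} [NormedAddCommGroup E] [InnerProductSpace ℂ E]

/-- On the graph of an operator `A`, `cayleyMap c (x, A x) = (A + c) x`; the Cayley transform
`(A - i)(A + i)⁻¹` thus sends `cayleyMap I p` to `cayleyMap (-I) p`. -/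
noncomputable def cayleyMap (c : ℂ) : (E × E) →L[ℂ] E := snd ℂ E E + c • fst ℂ E E

@[simp]
theorem cayleyMap_apply (c : ℂ) (p : E × E) : cayleyMap c p = p.2 + c • p.1 := rfl

theorem mem_LambdaAB_iff_cayleyMap (U : E →L[ℂ] E) (p : E × E) :
    p ∈ LambdaAB (I • (1 + U)) (1 - U) ↔ U (cayleyMap I p) = cayleyMap (-I) p := by
  change I • (p.1 + U p.1) = p.2 - U p.2 ↔ _
  simp only [cayleyMap_apply, map_add, map_smul]
  constructor <;> intro h <;> linear_combination (norm := module) h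

theorem eq_zero_of_cayleyMap_eq_zero {p : E × E} (hplus : cayleyMap I p = 0)
    (hminus : cayleyMap (-I) p = 0) : p = 0 := by
  rw [cayleyMap_apply] at hplus hminus
  have h₂ : (2 : ℂ) • p.2 = 0 := by linear_combination (norm := module) hplus + hminus
  have h₁ : (2 * I) • p.1 = 0 := by linear_combination (norm := module) hplus - hminus
  ext
  · simpa [Complex.I_ne_zero] using h₁
  · simpa using h₂

theorem isClosed_relAdjoint (Λ : Submodule ℂ (E × E)) : IsClosed (relAdjoint Λ : Set (E × E)) := by
  have : (relAdjoint Λ : Set (E × E)) = ⋂ q ∈ Λ, {p : E × E | ⟪p.1, q.2⟫ = ⟪p.2, q.1⟫} := by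
    ext p
    simp only [Set.mem_iInter]
    rfl
  rw [this]
  exact isClosed_biInter fun q _ =>
    isClosed_eq (continuous_fst.inner continuous_const) (continuous_snd.inner continuous_const)

namespace IsSelfAdjointRel

variable {Λ : Submodule ℂ (E × E)} (hΛ : IsSelfAdjointRel Λ)
include hΛ

theorem isClosed : IsClosed (Λ : Set (E × E)) := hΛ ▸ isClosed_relAdjoint Λ

theorem inner_fst_snd {p q : E × E} (hp : p ∈ Λ) (hq : q ∈ Λ) : ⟪p.1, q.2⟫ = ⟪p.2, q.1⟫ :=
  hΛ.ge hp q hq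

theorem norm_cayleyMap_sq {c : ℂ} (hc : c = I ∨ c = -I) {p : E × E} (hp : p ∈ Λ) :
    ‖cayleyMap c p‖ ^ 2 = ‖p.1‖ ^ 2 + ‖p.2‖ ^ 2 := by
  have him : (⟪p.2, p.1⟫).im = 0 := by
    rw [← Complex.conj_eq_iff_im, inner_conj_symm, hΛ.inner_fst_snd hp hp]
  have hre : RCLike.re (c * ⟪p.2, p.1⟫) = 0 := by rcases hc with rfl | rfl <;> simp [him]
  have hnorm : ‖c‖ = 1 := by rcases hc with rfl | rfl <;> simp
  rw [cayleyMap_apply, norm_add_sq (𝕜 := ℂ), inner_smul_right, norm_smul, hre, hnorm]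
  ring

theorem norm_le_norm_cayleyMap {c : ℂ} (hc : c = I ∨ c = -I) {p : E × E} (hp : p ∈ Λ) :
    ‖p‖ ≤ ‖cayleyMap c p‖ := by
  have h := hΛ.norm_cayleyMap_sq hc hp
  rw [Prod.norm_def]
  refine max_le ?_ ?_ <;>
    refine (pow_le_pow_iff_left₀ (norm_nonneg _) (norm_nonneg _) two_ne_zero).mp ?_ <;>
    nlinarith [sq_nonneg ‖p.1‖, sq_nonneg ‖p.2‖]

theorem norm_cayleyMap_neg {c : ℂ} (hc : c = I ∨ c = -I) {p : E × E} (hp : p ∈ Λ) :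
    ‖cayleyMap (-c) p‖ = ‖cayleyMap c p‖ := by
  have hc' : -c = I ∨ -c = -I := by rcases hc with rfl | rfl <;> simp
  rw [← sq_eq_sq₀ (norm_nonneg _) (norm_nonneg _), hΛ.norm_cayleyMap_sq hc hp,
    hΛ.norm_cayleyMap_sq hc' hp]

theorem eq_zero_of_forall_inner_cayleyMap_eq_zero {c : ℂ} (hc : c = I ∨ c = -I) {y : E}
    (hy : ∀ q ∈ Λ, ⟪cayleyMap c q, y⟫ = 0) : y = 0 := by
  have hmem : (y, c • y) ∈ Λ := hΛ.le fun q hq => by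
    have h := congrArg (starRingEnd ℂ) (hy q hq)
    rcases hc with rfl | rfl <;>
      simp only [cayleyMap_apply, inner_add_left, inner_smul_left, map_add, map_mul,
        inner_conj_symm, Complex.conj_I, map_neg, neg_neg, map_zero] at h ⊢ <;>
      linear_combination h
  have h := hΛ.norm_cayleyMap_sq (c := -c) (by rcases hc with rfl | rfl <;> simp) hmem
  simp only [cayleyMap_apply, neg_smul, add_neg_cancel, norm_zero, norm_smul] at h
  have hy : ‖y‖ ^ 2 = 0 := by nlinarith [sq_nonneg ‖y‖, sq_nonneg (‖c‖ * ‖y‖)]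
  exact norm_eq_zero.mp (pow_eq_zero_iff two_ne_zero |>.mp hy)

variable [CompleteSpace E]

theorem exists_mem_cayleyMap_eq {c : ℂ} (hc : c = I ∨ c = -I) (y : E) :
    ∃ p ∈ Λ, cayleyMap c p = y := by
  have : CompleteSpace Λ := hΛ.isClosed.completeSpace_coe
  have hsurj : Function.Surjective ((cayleyMap c).comp Λ.subtypeL) :=
    surjective_of_antilipschitz_of_forall_inner_eq_zero (K := 1)
      (((cayleyMap c).comp Λ.subtypeL).antilipschitz_of_bound fun p => by
        simpa using hΛ.norm_le_norm_cayleyMap hc p.2)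
      fun y hy => hΛ.eq_zero_of_forall_inner_cayleyMap_eq_zero hc fun q hq => hy ⟨q, hq⟩
  obtain ⟨p, hp⟩ := hsurj y
  exact ⟨p, p.2, hp⟩

noncomputable def cayleyEquiv {c : ℂ} (hc : c = I ∨ c = -I) : Λ ≃ₗ[ℂ] E :=
  LinearEquiv.ofBijective ((cayleyMap c).toLinearMap ∘ₗ Λ.subtype)
    ⟨(injective_iff_map_eq_zero _).2 fun p hp => by
      have h := hΛ.norm_le_norm_cayleyMap hc p.2
      simp_all,
    fun y => by
      obtain ⟨p, hp, rfl⟩ := hΛ.exists_mem_cayleyMap_eq hc y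
      exact ⟨⟨p, hp⟩, rfl⟩⟩

theorem cayleyEquiv_symm_trans_cayleyEquiv_cayleyMap {p : E × E} (hp : p ∈ Λ) :
    ((hΛ.cayleyEquiv (Or.inl rfl)).symm ≪≫ₗ hΛ.cayleyEquiv (Or.inr rfl)) (cayleyMap I p) =
      cayleyMap (-I) p := by
  have h : (hΛ.cayleyEquiv (Or.inl rfl)).symm (cayleyMap I p) = ⟨p, hp⟩ :=
    (LinearEquiv.symm_apply_eq _).2 rfl
  rw [LinearEquiv.trans_apply, h]
  rfl

noncomputable def cayleyTransform : E ≃ₗᵢ[ℂ] E :=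
  { (hΛ.cayleyEquiv (Or.inl rfl)).symm ≪≫ₗ hΛ.cayleyEquiv (Or.inr rfl) with
    norm_map' := fun x => by
      obtain ⟨p, hp, rfl⟩ := hΛ.exists_mem_cayleyMap_eq (Or.inl rfl) x
      rw [hΛ.cayleyEquiv_symm_trans_cayleyEquiv_cayleyMap hp]
      exact hΛ.norm_cayleyMap_neg (Or.inl rfl) hp }

theorem cayleyTransform_cayleyMap {p : E × E} (hp : p ∈ Λ) :
    hΛ.cayleyTransform (cayleyMap I p) = cayleyMap (-I) p :=
  hΛ.cayleyEquiv_symm_trans_cayleyEquiv_cayleyMap hp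

theorem eq_LambdaAB_cayleyTransform :
    Λ = LambdaAB (I • (1 + (hΛ.cayleyTransform : E →L[ℂ] E)))
      (1 - (hΛ.cayleyTransform : E →L[ℂ] E)) := by
  set U : E →L[ℂ] E := ↑hΛ.cayleyTransform
  have hle : Λ ≤ LambdaAB (I • (1 + U)) (1 - U) := fun p hp =>
    (mem_LambdaAB_iff_cayleyMap U p).2 (hΛ.cayleyTransform_cayleyMap hp)
  refine le_antisymm hle fun p hp => ?_
  obtain ⟨q, hq, hqp⟩ := hΛ.exists_mem_cayleyMap_eq (Or.inl rfl) (cayleyMap I p)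
  have hpq : p - q = 0 := eq_zero_of_cayleyMap_eq_zero (by rw [map_sub, hqp, sub_self]) (by
    rw [map_sub, ← (mem_LambdaAB_iff_cayleyMap U p).1 hp,
      ← (mem_LambdaAB_iff_cayleyMap U q).1 (hle hq), hqp, sub_self])
  rwa [sub_eq_zero.1 hpq]

end IsSelfAdjointRel

end

/-- Every self-adjoint linear relation has a unique Cayley transform:
a unique unitary `U` with `Λ = Λ^{i(1+U), 1-U}`. -/
theorem exists_unique_cayley_transform (Λ : Submodule ℂ (G × G))
    (hΛ : IsSelfAdjointRel Λ) :
    ∃! U : G →L[ℂ] G, U ∈ unitary (G →L[ℂ] G) ∧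
      Λ = LambdaAB (Complex.I • (1 + U)) (1 - U) := by
  refine ⟨hΛ.cayleyTransform, ⟨(Unitary.linearIsometryEquiv.symm hΛ.cayleyTransform).2,
    hΛ.eq_LambdaAB_cayleyTransform⟩, ?_⟩
  rintro W ⟨-, hW⟩
  ext y
  obtain ⟨p, hp, rfl⟩ := hΛ.exists_mem_cayleyMap_eq (Or.inl rfl) y
  rw [(mem_LambdaAB_iff_cayleyMap W p).1 (hW ▸ hp)]
  exact (hΛ.cayleyTransform_cayleyMap hp).symm
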